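/- For α, β ∈ D, the closed test α⁻[β⁺] reduces to the success ε if α = β, and to 0 otherwise. -/

import Mathlib

/-- Terms of the `∂₀λ`-calculus with tests. -/
inductive Tm : Type
  | var : ℕ → Tm
  | lam : ℕ → Tm → Tm
  | app : Tm → List Tm → Tm
  | taubar : List Tm → Tm

mutual
def fv : Tm → Set ℕ
  | .var y => {y}
  | .lam y M => fv M \ {y}
  | .app M P => fv M ∪ fvList P
  | .taubar V => fvList V
def fvList : List Tm → Set ℕ
  | [] => ∅
  | L :: P => fv L ∪ fvList P
end

mutual
def lsub (x : ℕ) (N : Tm) : Tm → Set Tm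
  | .var y => if y = x then {N} else ∅
  | .lam y M => if y = x then ∅ else {A | ∃ M' ∈ lsub x N M, A = Tm.lam y M'}
  | .app M P => {A | ∃ M' ∈ lsub x N M, A = Tm.app M' P} ∪
      {A | ∃ P' ∈ lsubList x N P, A = Tm.app M P'}
  | .taubar V => {A | ∃ V' ∈ lsubList x N V, A = Tm.taubar V'}
def lsubList (x : ℕ) (N : Tm) : List Tm → Set (List Tm)
  | [] => ∅
  | L :: P => {Q | ∃ L' ∈ lsub x N L, Q = L' :: P} ∪
      {Q | ∃ P' ∈ lsubList x N P, Q = L :: P'}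
end

def lsubIter (x : ℕ) : Set Tm → List Tm → Set Tm
  | X, [] => X
  | X, L :: Ls => lsubIter x (⋃ A ∈ X, lsub x L A) Ls

def zeroSub (x : ℕ) (X : Set Tm) : Set Tm := {A ∈ X | x ∉ fv A}

def zeroSub₁ (x : ℕ) (M : Tm) : Set Tm := {A | A = M ∧ x ∉ fv M}

mutual
/-- One-step reduction on terms: rules (β) and (τ̄), closed under contexts. -/
inductive StepT : Tm → Set Tm → Prop
  | beta (x : ℕ) (M : Tm) (P : List Tm) :
      StepT (.app (.lam x M) P) (zeroSub x (lsubIter x {M} P))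
  | taubarNil (V : List Tm) : StepT (.app (.taubar V) []) {.taubar V}
  | taubarCons (V : List Tm) {P : List Tm} (h : P ≠ []) : StepT (.app (.taubar V) P) ∅
  | lam (x : ℕ) {M : Tm} {𝕄 : Set Tm} : StepT M 𝕄 →
      StepT (.lam x M) {A | ∃ M' ∈ 𝕄, A = Tm.lam x M'}
  | appL {M : Tm} {𝕄 : Set Tm} (P : List Tm) : StepT M 𝕄 →
      StepT (.app M P) {A | ∃ M' ∈ 𝕄, A = Tm.app M' P}
  | appR (M : Tm) {P : List Tm} {ℙ : Set (List Tm)} : StepL P ℙ →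
      StepT (.app M P) {A | ∃ P' ∈ ℙ, A = Tm.app M P'}
  | taubarC {V : List Tm} {𝕍 : Set (List Tm)} : StepV V 𝕍 →
      StepT (.taubar V) {A | ∃ V' ∈ 𝕍, A = Tm.taubar V'}
inductive StepL : List Tm → Set (List Tm) → Prop
  | head {L : Tm} {𝕃 : Set Tm} (P : List Tm) : StepT L 𝕃 →
      StepL (L :: P) {Q | ∃ L' ∈ 𝕃, Q = L' :: P}
  | tail (L : Tm) {P : List Tm} {ℙ : Set (List Tm)} : StepL P ℙ →
      StepL (L :: P) {Q | ∃ P' ∈ ℙ, Q = L :: P'}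
/-- One-step reduction on tests: rules (τ) and (γ), and reduction in an element. -/
inductive StepV : List Tm → Set (List Tm) → Prop
  | tau (x : ℕ) (M : Tm) (V : List Tm) :
      StepV (Tm.lam x M :: V) {Q | ∃ M' ∈ zeroSub₁ x M, Q = M' :: V}
  | gamma (W V : List Tm) : StepV (Tm.taubar W :: V) {W ++ V}
  | elem {M : Tm} {𝕄 : Set Tm} (V : List Tm) : StepT M 𝕄 →
      StepV (M :: V) {Q | ∃ M' ∈ 𝕄, Q = M' :: V}
  | tail (M : Tm) {V : List Tm} {𝕍 : Set (List Tm)} : StepV V 𝕍 →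
      StepV (M :: V) {Q | ∃ V' ∈ 𝕍, Q = M :: V'}
end

/-- One-step reduction on sums (sets) of tests. -/
def SStepV (X Y : Set (List Tm)) : Prop :=
  ∃ (V : List Tm) (𝕍 𝕏 : Set (List Tm)), X = insert V 𝕏 ∧ StepV V 𝕍 ∧ Y = 𝕍 ∪ 𝕏

variable {D : Type*}

/-- The `i`-th multiset component of an element of `D ≅ Multiset D × D`. -/
def seqD (e : D ≃ Multiset D × D) : ℕ → D → Multiset D
  | 0, α => (e α).1
  | i + 1, α => seqD e i (e α).2

/-- The element `a₁ :: ⋯ :: a_r :: *` of `D`. -/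
def buildD (e : D ≃ Multiset D × D) (star : D) (as : List (Multiset D)) : D :=
  as.foldr (fun a β => e.symm (a, β)) star

def parallel (ts : List (List Tm)) : List Tm := ts.foldr (· ++ ·) []

def lamMany (r : ℕ) (body : Tm) : Tm := (List.range r).foldr Tm.lam body

/-- The prescription for `α⁺` for `α = a₁ :: ⋯ :: a_r :: *`. -/
noncomputable def plusSpec (mt : D → Tm → List Tm) (as : List (Multiset D)) : Tm :=
  lamMany as.length (Tm.taubar (parallel ((List.range as.length).map
    (fun i => parallel ((as.getD i 0).toList.map (fun β => mt β (Tm.var i)))))))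

/-- The prescription for the test `α⁻[M]` for `α = a₁ :: ⋯ :: a_r :: *`. -/
noncomputable def minusSpec (p : D → Tm) (as : List (Multiset D)) (M : Tm) : List Tm :=
  [(as.map (fun a => (a.map p).toList)).foldl Tm.app M]

/-!
Write `α = a₁ :: ⋯ :: a_r :: *` and `β = b₁ :: ⋯ :: b_s :: *` with no trailing empty
multiset. The test `α⁻[β⁺] = [β⁺ a₁⁺ ⋯ a_r⁺]` is evaluated one component at a time. The
abstracted variable `x₁` of `β⁺` occurs exactly once for each `γ ∈ b₁`, as the head of `γ⁻[x₁]`,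
so the β-step substituting the bag `a₁⁺` for `x₁` yields the sum, over all bijections between
`a₁` and `b₁`, of the tests `γ⁻[δ⁺]` of the matched pairs (and `0` if the cardinalities
differ). Each of these involves strictly smaller points, so by well-founded induction it reduces
to `ε` if `γ = δ` and to `0` otherwise; hence a summand survives iff its bijection matches equal
points, and one survives iff `a₁ = b₁`. An empty component on either side is consumed by `τ`
(unused variable) or `τ̄` (empty bag), while a non-empty one facing nothing gives `0`. The sides
run out together iff the lists, hence the points, are equal.
-/

open Relation

/-! ### Sums of tests -/

/-- The sum `ε` if `P` holds and `0` otherwise. -/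
def outcome (P : Prop) : Set (List Tm) := {V | V = [] ∧ P}

def EvalsTo (X : Set (List Tm)) (P : Prop) : Prop := ReflTransGen SStepV X (outcome P)

lemma EvalsTo.of_true {X : Set (List Tm)} {P : Prop} (h : EvalsTo X P) (hP : P) :
    ReflTransGen SStepV X {[]} := by
  simpa [EvalsTo, outcome, hP, Set.ofPred_eq_eq_singleton] using h

lemma EvalsTo.of_false {X : Set (List Tm)} {P : Prop} (h : EvalsTo X P) (hP : ¬P) :
    ReflTransGen SStepV X ∅ := by
  simpa [EvalsTo, outcome, hP] using h

lemma evalsTo_nil : EvalsTo {[]} True := by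
  simpa [EvalsTo, outcome, Set.ofPred_eq_eq_singleton] using ReflTransGen.refl

lemma outcome_biUnion {ι : Type*} (S : Set ι) (P : ι → Prop) :
    ⋃ i ∈ S, outcome (P i) = outcome (∃ i ∈ S, P i) := by
  ext V
  simp [outcome]

lemma StepV.sStepV_singleton {V : List Tm} {𝕍 : Set (List Tm)} (h : StepV V 𝕍) :
    SStepV {V} 𝕍 :=
  ⟨V, 𝕍, ∅, by simp, h, by simp⟩

lemma SStepV.union_right {X X' : Set (List Tm)} (h : SStepV X X') (Y : Set (List Tm)) :
    SStepV (X ∪ Y) (X' ∪ Y) := by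
  obtain ⟨V, 𝕍, 𝕏, rfl, hV, rfl⟩ := h
  exact ⟨V, 𝕍, 𝕏 ∪ Y, Set.insert_union, hV, Set.union_assoc ..⟩

lemma reflTransGen_sStepV_union {X X' Y Y' : Set (List Tm)} (hX : ReflTransGen SStepV X X')
    (hY : ReflTransGen SStepV Y Y') : ReflTransGen SStepV (X ∪ Y) (X' ∪ Y') := by
  have right_fixed : ∀ {X X'} (Z : Set (List Tm)), ReflTransGen SStepV X X' →
      ReflTransGen SStepV (X ∪ Z) (X' ∪ Z) := fun Z h =>
    h.lift (· ∪ Z) fun _ _ hs => hs.union_right Z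
  refine (right_fixed Y hX).trans ?_
  simpa only [Set.union_comm X'] using right_fixed X' hY

lemma reflTransGen_sStepV_biUnion {ι : Type*} {S : Set ι} (hS : S.Finite)
    {X Y : ι → Set (List Tm)} (h : ∀ i ∈ S, ReflTransGen SStepV (X i) (Y i)) :
    ReflTransGen SStepV (⋃ i ∈ S, X i) (⋃ i ∈ S, Y i) := by
  induction S, hS using Set.Finite.induction_on with
  | empty => simpa using ReflTransGen.refl
  | insert _ _ ih =>
    simp only [Set.biUnion_insert]
    exact reflTransGen_sStepV_union (h _ (Set.mem_insert ..))
      (ih fun i hi => h i (Set.mem_insert_of_mem _ hi))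

lemma EvalsTo.biUnion {ι : Type*} {S : Set ι} (hS : S.Finite) {X : ι → Set (List Tm)}
    {P : ι → Prop} (h : ∀ i ∈ S, EvalsTo (X i) (P i)) :
    EvalsTo (⋃ i ∈ S, X i) (∃ i ∈ S, P i) := by
  rw [EvalsTo, ← outcome_biUnion]
  exact reflTransGen_sStepV_biUnion hS h

lemma StepV.append_right (W : List Tm) : ∀ {V : List Tm} {𝕍 : Set (List Tm)}, StepV V 𝕍 →
    StepV (V ++ W) ((· ++ W) '' 𝕍)
  | _, _, .tau x M V => by
    rw [List.cons_append]
    convert StepV.tau x M (V ++ W) using 1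
    ext; simp [eq_comm]
  | _, _, .gamma W' V => by simpa using StepV.gamma W' (V ++ W)
  | _, _, .elem V h => by
    rw [List.cons_append]
    convert StepV.elem (V ++ W) h using 1
    ext; simp [eq_comm]
  | _, _, .tail M h => by
    rw [List.cons_append]
    convert StepV.tail M (h.append_right W) using 1
    ext; simp [eq_comm]

lemma reflTransGen_sStepV_append_right (W : List Tm) {X Y : Set (List Tm)}
    (h : ReflTransGen SStepV X Y) : ReflTransGen SStepV ((· ++ W) '' X) ((· ++ W) '' Y) :=
  h.lift _ fun _ _ ⟨V, 𝕍, 𝕏, hX, hV, hY⟩ =>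
    ⟨V ++ W, _, (· ++ W) '' 𝕏, by rw [hX, Set.image_insert_eq], hV.append_right W,
      by rw [hY, Set.image_union]⟩

lemma EvalsTo.append {U W : List Tm} {P Q : Prop} (hU : EvalsTo {U} P) (hW : EvalsTo {W} Q) :
    EvalsTo {U ++ W} (P ∧ Q) := by
  have hUW := reflTransGen_sStepV_append_right W hU
  rw [Set.image_singleton] at hUW
  by_cases hP : P
  · have : (· ++ W) '' outcome P = {W} := by ext; simp [outcome, hP]
    rw [this] at hUW
    simpa [EvalsTo, hP] using hUW.trans hW
  · have : (· ++ W) '' outcome P = outcome (P ∧ Q) := by ext; simp [outcome, hP]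
    rwa [this] at hUW

lemma EvalsTo.of_iff {X : Set (List Tm)} {P Q : Prop} (h : EvalsTo X P) (hPQ : P ↔ Q) :
    EvalsTo X Q := by rwa [← propext hPQ]

lemma evalsTo_zipWith {α : Type*} {g : α → α → Tm} : ∀ {gl dl : List α},
    gl.length = dl.length → (∀ γ δ, (γ, δ) ∈ gl.zip dl → EvalsTo {[g γ δ]} (γ = δ)) →
    EvalsTo {List.zipWith g gl dl} (gl = dl)
  | [], [], _, _ => evalsTo_nil.of_iff (by simp)
  | γ :: gl, δ :: dl, hlen, h => by
    have head := h γ δ (by simp)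
    have tail := evalsTo_zipWith (by simpa using hlen)
      fun γ' δ' hmem => h γ' δ' (List.mem_cons_of_mem _ hmem)
    simpa using head.append tail

/-! ### Free variables and linear substitution -/

def apps (M : Tm) (Ps : List (List Tm)) : Tm := Ps.foldl Tm.app M

def lams (ys : List ℕ) (M : Tm) : Tm := ys.foldr Tm.lam M

@[simp] lemma apps_nil (M : Tm) : apps M [] = M := rfl
@[simp] lemma apps_cons (M : Tm) (P : List Tm) (Ps : List (List Tm)) :
    apps M (P :: Ps) = apps (.app M P) Ps := rfl
@[simp] lemma lams_nil (M : Tm) : lams [] M = M := rfl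
@[simp] lemma lams_cons (y : ℕ) (ys : List ℕ) (M : Tm) :
    lams (y :: ys) M = .lam y (lams ys M) := rfl

lemma mem_fvList {x : ℕ} : ∀ {l : List Tm}, x ∈ fvList l ↔ ∃ M ∈ l, x ∈ fv M
  | [] => by simp [fvList]
  | M :: l => by simp [fvList, mem_fvList]

lemma fvList_append (A B : List Tm) : fvList (A ++ B) = fvList A ∪ fvList B := by
  ext
  simp only [mem_fvList, List.mem_append, Set.mem_union]
  grind

lemma fvList_eq_empty {l : List Tm} : fvList l = ∅ ↔ ∀ M ∈ l, fv M = ∅ := by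
  simp only [Set.eq_empty_iff_forall_notMem, mem_fvList]
  grind

lemma fv_apps_of_closed {Ps : List (List Tm)} (hPs : ∀ P ∈ Ps, fvList P = ∅) (M : Tm) :
    fv (apps M Ps) = fv M := by
  induction Ps generalizing M with
  | nil => rfl
  | cons P Ps ih =>
    rw [apps_cons, ih (fun P' hP' => hPs P' (List.mem_cons_of_mem _ hP')), fv,
      hPs P List.mem_cons_self, Set.union_empty]

lemma fvList_zipWith_of_closed {α β : Type*} {g : α → β → Tm} (hg : ∀ a b, fv (g a b) = ∅) :
    ∀ (l : List α) (l' : List β), fvList (List.zipWith g l l') = ∅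
  | [], _ => by simp [fvList]
  | _ :: _, [] => by simp [fvList]
  | a :: l, b :: l' => by simp [fvList, hg, fvList_zipWith_of_closed hg l l']

lemma fv_lams (ys : List ℕ) (M : Tm) : fv (lams ys M) = fv M \ {y | y ∈ ys} := by
  induction ys with
  | nil => simp
  | cons y ys ih =>
    ext z
    simp only [lams_cons, fv, ih]
    simp only [Set.mem_sdiff, Set.mem_singleton_iff, Set.mem_ofPred_eq, List.mem_cons]
    tauto

mutual
lemma lsub_eq_empty {x : ℕ} {N : Tm} : ∀ {M : Tm}, x ∉ fv M → lsub x N M = ∅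
  | .var y, h => by simp_all [fv, lsub, eq_comm]
  | .lam y M, h => by
    by_cases hy : y = x
    · simp [lsub, hy]
    · have hM : x ∉ fv M := fun hx => hy (by simp_all [fv])
      simp [lsub, hy, lsub_eq_empty hM]
  | .app M P, h => by
    simp only [fv, Set.mem_union, not_or] at h
    simp [lsub, lsub_eq_empty h.1, lsubList_eq_empty h.2]
  | .taubar V, h => by simp_all [fv, lsub, lsubList_eq_empty]
lemma lsubList_eq_empty {x : ℕ} {N : Tm} : ∀ {P : List Tm}, x ∉ fvList P → lsubList x N P = ∅
  | [], _ => by simp [lsubList]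
  | L :: P, h => by
    simp only [fvList, Set.mem_union, not_or] at h
    simp [lsubList, lsub_eq_empty h.1, lsubList_eq_empty h.2]
end

lemma lsub_apps_of_closed {x : ℕ} {N : Tm} {Ps : List (List Tm)}
    (hPs : ∀ P ∈ Ps, fvList P = ∅) (M : Tm) :
    lsub x N (apps M Ps) = (apps · Ps) '' lsub x N M := by
  induction Ps generalizing M with
  | nil => simp
  | cons P Ps ih =>
    have hP : lsubList x N P = ∅ := lsubList_eq_empty (by simp [hPs P List.mem_cons_self])
    rw [apps_cons, ih (fun P' hP' => hPs P' (List.mem_cons_of_mem _ hP')), lsub, hP]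
    ext A
    simp [eq_comm]

lemma lsub_lams {x : ℕ} {N : Tm} {ys : List ℕ} (hx : x ∉ ys) (M : Tm) :
    lsub x N (lams ys M) = lams ys '' lsub x N M := by
  induction ys with
  | nil => ext; simp
  | cons y ys ih =>
    have hy : y ≠ x := fun h => hx (h ▸ List.mem_cons_self)
    rw [lams_cons, lsub, if_neg hy, ih (fun h => hx (List.mem_cons_of_mem _ h))]
    ext A
    simp [eq_comm]

lemma lsubList_append {x : ℕ} {N : Tm} (A B : List Tm) : lsubList x N (A ++ B) =
    (· ++ B) '' lsubList x N A ∪ (A ++ ·) '' lsubList x N B := by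
  induction A with
  | nil => simp [lsubList]
  | cons L A ih =>
    rw [List.cons_append, lsubList, ih, lsubList]
    ext Q
    simp only [Set.mem_union, Set.mem_ofPred_eq, Set.mem_image]
    grind

lemma setOf_exists_mem_eq_image {α β : Type*} (s : Set α) (f : α → β) :
    {b | ∃ a ∈ s, b = f a} = f '' s := by
  ext; simp [eq_comm]

lemma stepT_apps {M : Tm} {𝕄 : Set Tm} (h : StepT M 𝕄) (Ps : List (List Tm)) :
    StepT (apps M Ps) ((apps · Ps) '' 𝕄) := by
  induction Ps generalizing M 𝕄 with
  | nil => simpa using h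
  | cons P Ps ih =>
    have := ih (StepT.appL P h)
    rwa [setOf_exists_mem_eq_image, Set.image_image] at this

lemma sStepV_apps {M : Tm} {𝕄 : Set Tm} (h : StepT M 𝕄) (Ps : List (List Tm)) :
    SStepV {[apps M Ps]} ((fun M' => [apps M' Ps]) '' 𝕄) := by
  have := StepV.sStepV_singleton (StepV.elem [] (stepT_apps h Ps))
  rwa [setOf_exists_mem_eq_image, Set.image_image] at this

/-! ### Substituting a bag for a variable with several occurrences -/

def oneSub (x : ℕ) (N : Tm) (q : List Tm) : Set (List Tm) :=
  {q' | ∃ u v, q = u ++ .var x :: v ∧ q' = u ++ N :: v}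

lemma oneSub_nil (x : ℕ) (N : Tm) : oneSub x N [] = ∅ := by
  simp [oneSub]

lemma oneSub_cons (x : ℕ) (N M : Tm) (q : List Tm) :
    oneSub x N (M :: q) = {q' | M = .var x ∧ q' = N :: q} ∪ (M :: ·) '' oneSub x N q := by
  ext q'
  simp only [oneSub, Set.mem_union, Set.mem_ofPred_eq, Set.mem_image]
  constructor
  · rintro ⟨_ | ⟨M', u⟩, v, hq, rfl⟩
    · simp_all
    · simp only [List.cons_append, List.cons.injEq] at hq
      exact Or.inr ⟨u ++ N :: v, ⟨u, v, hq.2, rfl⟩, by simp [hq.1]⟩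
  · rintro (⟨rfl, rfl⟩ | ⟨_, ⟨u, v, rfl, rfl⟩, rfl⟩)
    · exact ⟨[], q, rfl, rfl⟩
    · exact ⟨M :: u, v, rfl, rfl⟩

def VarOrFresh (x : ℕ) (q : List Tm) : Prop := ∀ M ∈ q, M = .var x ∨ x ∉ fv M

lemma lsubList_zipWith_apps {x : ℕ} {N : Tm} : ∀ {q : List Tm} {gss : List (List (List Tm))},
    q.length = gss.length → VarOrFresh x q → (∀ gs ∈ gss, ∀ g ∈ gs, fvList g = ∅) →
    lsubList x N (List.zipWith apps q gss) = (List.zipWith apps · gss) '' oneSub x N q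
  | [], [], _, _, _ => by simp [lsubList, oneSub_nil]
  | M :: q, gs :: gss, hlen, hq, hgss => by
    have ih := lsubList_zipWith_apps (N := N) (by simpa using hlen)
      (fun M' hM' => hq M' (List.mem_cons_of_mem _ hM'))
      (fun gs' hgs' => hgss gs' (List.mem_cons_of_mem _ hgs'))
    have hhead : lsub x N (apps M gs) = {A | M = .var x ∧ A = apps N gs} := by
      rw [lsub_apps_of_closed (hgss gs List.mem_cons_self)]
      rcases hq M List.mem_cons_self with rfl | hM
      · ext; simp [lsub]
      · have hne : M ≠ .var x := by rintro rfl; simp [fv] at hM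
        simp [lsub_eq_empty hM, hne]
    rw [List.zipWith_cons_cons, lsubList, hhead, ih, oneSub_cons]
    ext Q
    simp only [Set.mem_union, Set.mem_ofPred_eq, Set.mem_image]
    grind [List.zipWith_cons_cons]

lemma mem_fvList_zipWith_apps {x : ℕ} : ∀ {q : List Tm} {gss : List (List (List Tm))},
    q.length = gss.length → VarOrFresh x q → (∀ gs ∈ gss, ∀ g ∈ gs, fvList g = ∅) →
    (x ∈ fvList (List.zipWith apps q gss) ↔ .var x ∈ q)
  | [], [], _, _, _ => by simp [fvList]
  | M :: q, gs :: gss, hlen, hq, hgss => by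
    have ih := mem_fvList_zipWith_apps (by simpa using hlen)
      (fun M' hM' => hq M' (List.mem_cons_of_mem _ hM'))
      (fun gs' hgs' => hgss gs' (List.mem_cons_of_mem _ hgs'))
    have hhead : x ∈ fv M ↔ M = .var x := by
      rcases hq M List.mem_cons_self with rfl | hM
      · simp [fv]
      · exact ⟨fun h => absurd h hM, by rintro rfl; simp [fv]⟩
    rw [List.zipWith_cons_cons, fvList, Set.mem_union, ih,
      fv_apps_of_closed (hgss gs List.mem_cons_self), hhead, List.mem_cons, eq_comm]

lemma Multiset.coe_append_cons {α : Type*} (u v : List α) (a : α) :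
    ((u ++ a :: v : List α) : Multiset α) = a ::ₘ ↑(u ++ v) :=
  Quot.sound List.perm_middle

lemma lsubIter_empty (x : ℕ) : ∀ Ns : List Tm, lsubIter x ∅ Ns = ∅
  | [] => rfl
  | _ :: Ns => by simp [lsubIter, lsubIter_empty x Ns]

lemma biUnion_oneSub_of_var_mem (x : ℕ) (N : Tm) (m : Multiset Tm) :
    ⋃ q ∈ {q : List Tm | (q : Multiset Tm) = .var x ::ₘ m}, oneSub x N q =
      {q : List Tm | (q : Multiset Tm) = N ::ₘ m} := by
  ext q'
  simp only [Set.mem_iUnion, Set.mem_ofPred_eq, oneSub, exists_prop]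
  constructor
  · rintro ⟨_, hq, u, v, rfl, rfl⟩
    rw [Multiset.coe_append_cons, Multiset.cons_inj_right] at hq
    rw [Multiset.coe_append_cons, hq]
  · intro hq'
    obtain ⟨u, v, rfl⟩ := List.append_of_mem (Multiset.mem_coe.1 (hq' ▸ Multiset.mem_cons_self N m))
    rw [Multiset.coe_append_cons, Multiset.cons_inj_right] at hq'
    exact ⟨u ++ .var x :: v, by rw [Multiset.coe_append_cons, hq'], u, v, rfl, rfl⟩

lemma biUnion_oneSub_of_var_notMem {x : ℕ} (N : Tm) {m : Multiset Tm} (hm : .var x ∉ m) :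
    ⋃ q ∈ {q : List Tm | (q : Multiset Tm) = m}, oneSub x N q = ∅ := by
  ext q'
  simp only [Set.mem_iUnion, Set.mem_ofPred_eq, oneSub, exists_prop, Set.mem_empty_iff_false,
    iff_false, not_exists, not_and]
  rintro _ rfl u v rfl
  simp [Multiset.coe_append_cons] at hm

lemma varOrFresh_of_coe_eq {x : ℕ} {q : List Tm} {m : Multiset Tm} {j : ℕ}
    (hq : (q : Multiset Tm) = m + .replicate j (.var x)) (hm : ∀ M ∈ m, x ∉ fv M) :
    q.length = Multiset.card m + j ∧ VarOrFresh x q := by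
  refine ⟨by rw [← Multiset.coe_card, hq, Multiset.card_add, Multiset.card_replicate], ?_⟩
  intro M hM
  rw [← Multiset.mem_coe, hq, Multiset.mem_add] at hM
  exact hM.elim (fun h => Or.inr (hm M h)) (fun h => Or.inl (Multiset.eq_of_mem_replicate h))

section LinearInSlots

variable {x n : ℕ} {F : List Tm → Tm}

/-- Substituting the terms `Ns` one by one for `x` into `F q`, where `q` holds the hole `x`
`j` times, fills `Ns.length` of those holes in every possible way. -/
lemma lsubIter_image_slots
    (hsub : ∀ q N, q.length = n → VarOrFresh x q → x ∉ fv N →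
      lsub x N (F q) = F '' oneSub x N q) :
    ∀ (Ns : List Tm) (m : Multiset Tm) (j : ℕ), (∀ N ∈ Ns, x ∉ fv N) → (∀ M ∈ m, x ∉ fv M) →
      Multiset.card m + j = n →
      lsubIter x (F '' {q : List Tm | (q : Multiset Tm) = m + .replicate j (.var x)}) Ns =
        F '' {q : List Tm | ∃ i, (q : Multiset Tm) = m + ↑Ns + .replicate i (.var x) ∧
          i + Ns.length = j}
  | [], m, j, _, _, _ => by simp [lsubIter]
  | N :: Ns, m, j, hNs, hm, hcard => by
    have hxm : Tm.var x ∉ m := fun h => hm _ h (by simp [fv])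
    have hN : x ∉ fv N := hNs N List.mem_cons_self
    set S := {q : List Tm | (q : Multiset Tm) = m + .replicate j (.var x)} with hS
    have hstep : ⋃ A ∈ F '' S, lsub x N A = F '' ⋃ q ∈ S, oneSub x N q := by
      rw [Set.biUnion_image, Set.image_iUnion₂]
      refine Set.iUnion₂_congr fun q hq => ?_
      obtain ⟨hlen, hq⟩ := varOrFresh_of_coe_eq hq hm
      exact hsub q N (hlen.trans hcard) hq hN
    rw [lsubIter, hstep, hS]
    cases j with
    | zero =>
      rw [Multiset.replicate_zero, add_zero, biUnion_oneSub_of_var_notMem N hxm, Set.image_empty,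
        lsubIter_empty]
      ext; simp
    | succ j =>
      rw [Multiset.replicate_succ, Multiset.add_cons, biUnion_oneSub_of_var_mem,
        ← Multiset.cons_add, lsubIter_image_slots hsub Ns (N ::ₘ m) j
          (fun N' hN' => hNs N' (List.mem_cons_of_mem _ hN'))
          (Multiset.forall_mem_cons.2 ⟨hN, hm⟩) (by rw [Multiset.card_cons]; omega)]
      ext
      simp [Multiset.cons_add, Multiset.add_cons, ← Multiset.cons_coe, ← add_assoc]

lemma zeroSub_lsubIter_replicate
    (hsub : ∀ q N, q.length = n → VarOrFresh x q → x ∉ fv N →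
      lsub x N (F q) = F '' oneSub x N q)
    (hfv : ∀ q, q.length = n → VarOrFresh x q → (x ∈ fv (F q) ↔ .var x ∈ q))
    {Ns : List Tm} (hNs : ∀ N ∈ Ns, x ∉ fv N) :
    zeroSub x (lsubIter x {F (.replicate n (.var x))} Ns) =
      F '' {q | q.Perm Ns ∧ q.length = n} := by
  have hinit : ({F (.replicate n (.var x))} : Set Tm) =
      F '' {q : List Tm | (q : Multiset Tm) = 0 + .replicate n (.var x)} := by
    simp only [zero_add, ← Multiset.coe_replicate, Multiset.coe_eq_coe, List.perm_replicate]
    exact Set.image_singleton.symm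
  rw [hinit, lsubIter_image_slots hsub Ns 0 n hNs (by simp) (by simp)]
  ext A
  simp only [zeroSub, Set.mem_image, Set.mem_ofPred_eq]
  constructor
  · rintro ⟨⟨q, ⟨i, hq, hi⟩, rfl⟩, hA⟩
    obtain ⟨hlen, hslots⟩ := varOrFresh_of_coe_eq hq (by simpa using hNs)
    have hi0 : i = 0 := by
      by_contra hi0
      refine hA ((hfv q (by simp at hlen; omega) hslots).2 ?_)
      rw [← Multiset.mem_coe, hq]
      exact Multiset.mem_add.2 (Or.inr (Multiset.mem_replicate.2 ⟨hi0, rfl⟩))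
    subst hi0
    refine ⟨q, ⟨Multiset.coe_eq_coe.1 (by simpa using hq), by simp at hlen; omega⟩, rfl⟩
  · rintro ⟨q, ⟨hperm, hlen⟩, rfl⟩
    refine ⟨⟨q, ⟨0, by simpa using Multiset.coe_eq_coe.2 hperm,
      by simp [← hlen, hperm.length_eq]⟩, rfl⟩, ?_⟩
    have hslots : VarOrFresh x q := fun M hM => Or.inr (hNs M (hperm.subset hM))
    rw [hfv q hlen hslots]
    exact fun hx => hNs _ (hperm.subset hx) (by simp [fv])

end LinearInSlots

/-- The β-redex `(λx. λys. τ̄(T · (x)gs₁ ⋯ (x)gsₙ · R)) Ns`, with `x` free only in the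
`n` displayed heads, reduces to the sum of all ways of putting the `Ns` into those heads. -/
lemma zeroSub_lsubIter_row {x : ℕ} {ys : List ℕ} {T R Ns : List Tm}
    {gss : List (List (List Tm))} (hys : x ∉ ys) (hT : x ∉ fvList T) (hR : x ∉ fvList R)
    (hgss : ∀ gs ∈ gss, ∀ g ∈ gs, fvList g = ∅) (hNs : ∀ N ∈ Ns, x ∉ fv N) :
    zeroSub x (lsubIter x
      {lams ys (.taubar (T ++ List.zipWith apps (.replicate gss.length (.var x)) gss ++ R))} Ns) =
      (fun q => lams ys (.taubar (T ++ List.zipWith apps q gss ++ R))) ''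
        {q | q.Perm Ns ∧ q.length = gss.length} := by
  refine zeroSub_lsubIter_replicate
    (F := fun q => lams ys (.taubar (T ++ List.zipWith apps q gss ++ R)))
    (fun q N hlen hq _ => ?_) (fun q hlen hq => ?_) hNs
  · rw [lsub_lams hys, lsub, lsubList_append, lsubList_append, lsubList_eq_empty hT,
      lsubList_eq_empty hR, lsubList_zipWith_apps hlen hq hgss]
    ext A
    simp [eq_comm]
  · rw [← mem_fvList_zipWith_apps hlen hq hgss, fv_lams, fv, fvList_append, fvList_append]
    simp [hys, hT, hR]

lemma List.zipWith_replicate_length {α β γ : Type*} (f : α → β → γ) (c : α) :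
    ∀ l : List β, List.zipWith f (.replicate l.length c) l = l.map (f c)
  | [] => rfl
  | b :: l => by simp [List.replicate_succ, List.zipWith_replicate_length f c l]

/-! ### Evaluation of `α⁻[β⁺]` -/

def Normalized (as : List (Multiset D)) : Prop := ∀ h : as ≠ [], as.getLast h ≠ 0

lemma Normalized.of_cons {a : Multiset D} {as : List (Multiset D)} (h : Normalized (a :: as)) :
    Normalized as := fun hne => by simpa [List.getLast_cons hne] using h (List.cons_ne_nil a as)

lemma Normalized.ne_nil_of_zero_cons {as : List (Multiset D)} (h : Normalized (0 :: as)) :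
    as ≠ [] := by
  rintro rfl
  exact h (List.cons_ne_nil _ _) rfl

noncomputable def bags (p : D → Tm) (as : List (Multiset D)) : List (List Tm) :=
  as.map fun a => (a.map p).toList

noncomputable def plusBody (args : D → List (List Tm)) : ℕ → List (Multiset D) → List Tm
  | _, [] => []
  | k, b :: bs => b.toList.map (fun γ => apps (.var k) (args γ)) ++ plusBody args (k + 1) bs

/-- Evaluating `α⁻[β⁺]` for `α = a₁ :: ⋯ :: as`, `β = b₁ :: ⋯ :: bs` passes through
`[stage p args k T as bs]`, where the variables `x_k, x_{k+1}, …` are still abstracted and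
`T` collects the tests produced by the components matched so far. -/
noncomputable def stage (p : D → Tm) (args : D → List (List Tm)) (k : ℕ) (T : List Tm)
    (as bs : List (Multiset D)) : Tm :=
  apps (lams (List.range' k bs.length) (.taubar (T ++ plusBody args k bs))) (bags p as)

lemma setOf_perm_toList_map (p : D → Tm) (a : Multiset D) (n : ℕ) :
    {q : List Tm | q.Perm (a.map p).toList ∧ q.length = n} =
      (·.map p) '' {dl : List D | (dl : Multiset D) = a ∧ dl.length = n} := by
  have hperm : (a.map p).toList.Perm (a.toList.map p) := by
    rw [← Multiset.coe_eq_coe, Multiset.coe_toList, ← Multiset.map_coe, Multiset.coe_toList]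
  ext q
  simp only [Set.mem_ofPred_eq, Set.mem_image]
  constructor
  · rintro ⟨hq, rfl⟩
    obtain ⟨dl, hdl, rfl⟩ := List.mem_map.1 <| (List.map_permutations p a.toList).symm ▸
      List.mem_permutations.2 (hq.trans hperm)
    refine ⟨dl, ⟨?_, by simp⟩, rfl⟩
    rw [← Multiset.coe_toList a, Multiset.coe_eq_coe]
    exact List.mem_permutations.1 hdl
  · rintro ⟨dl, ⟨hdl, rfl⟩, rfl⟩
    refine ⟨((List.Perm.map p ?_).trans hperm.symm), by simp⟩
    rw [← Multiset.coe_eq_coe, hdl, Multiset.coe_toList]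

section Stages

variable {p : D → Tm} {args : D → List (List Tm)}

lemma fvList_map_apps_var (k : ℕ) {l : List D} (hargs : ∀ γ ∈ l, ∀ g ∈ args γ, fvList g = ∅) :
    fvList (l.map fun γ => apps (.var k) (args γ)) = {y | y = k ∧ l ≠ []} := by
  have hfv : ∀ γ ∈ l, fv (apps (.var k) (args γ)) = {k} := fun γ hγ => by
    rw [fv_apps_of_closed (hargs γ hγ), fv]
  ext y
  simp only [mem_fvList, List.mem_map, Set.mem_ofPred_eq]
  constructor
  · rintro ⟨_, ⟨γ, hγ, rfl⟩, hy⟩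
    rw [hfv γ hγ] at hy
    exact ⟨hy, List.ne_nil_of_mem hγ⟩
  · rintro ⟨rfl, hl⟩
    obtain ⟨γ, hγ⟩ := List.exists_mem_of_ne_nil l hl
    exact ⟨_, ⟨γ, hγ, rfl⟩, by simp [hfv γ hγ]⟩

lemma fvList_plusBody_subset :
    ∀ (k : ℕ) {bs : List (Multiset D)}, (∀ b ∈ bs, ∀ γ ∈ b, ∀ g ∈ args γ, fvList g = ∅) →
      fvList (plusBody args k bs) ⊆ Set.Ico k (k + bs.length)
  | _, [], _ => by simp [plusBody, fvList]
  | k, b :: bs, hargs => by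
    rw [plusBody, fvList_append,
      fvList_map_apps_var k fun γ hγ => hargs b List.mem_cons_self γ (Multiset.mem_toList.1 hγ)]
    refine Set.union_subset (fun y hy => ?_) fun y hy => ?_
    · simp [hy.1]
    · have := fvList_plusBody_subset (k + 1)
        (fun b' hb' => hargs b' (List.mem_cons_of_mem _ hb')) hy
      simp only [Set.mem_Ico, List.length_cons] at this ⊢
      omega

lemma sStepV_stage_nil_nil (k : ℕ) (T : List Tm) : SStepV {[stage p args k T [] []]} {T} := by
  simpa [stage, plusBody, bags] using (StepV.gamma T []).sStepV_singleton

lemma sStepV_stage_nil_cons (hargs : ∀ γ, ∀ g ∈ args γ, fvList g = ∅) {T : List Tm}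
    (hT : fvList T = ∅) (k : ℕ) (b : Multiset D) (bt : List (Multiset D)) :
    SStepV {[stage p args k T [] (b :: bt)]} {V | b = 0 ∧ V = [stage p args (k + 1) T [] bt]} := by
  set M := lams (List.range' (k + 1) bt.length) (.taubar (T ++ plusBody args k (b :: bt)))
  have hstage : stage p args k T [] (b :: bt) = .lam k M := by
    simp [stage, M, bags, List.range'_succ]
  have hfv : k ∈ fv M ↔ b ≠ 0 := by
    have hrest : k ∉ fvList (plusBody args (k + 1) bt) := fun h => by
      simpa using fvList_plusBody_subset _ (fun _ _ γ _ => hargs γ) h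
    rw [fv_lams, fv, plusBody, fvList_append, fvList_append,
      fvList_map_apps_var k fun γ _ => hargs γ, hT]
    simp [hrest, List.mem_range'_1]
  have hM : b = 0 → M = stage p args (k + 1) T [] bt := by
    rintro rfl
    simp [M, stage, plusBody, bags]
  rw [hstage]
  convert (StepV.tau k M []).sStepV_singleton using 1
  ext V
  simp only [zeroSub₁, hfv, Set.mem_ofPred_eq, ne_eq, not_not]
  grind

lemma sStepV_stage_cons_nil (k : ℕ) (T : List Tm) (a : Multiset D) (at' : List (Multiset D)) :
    SStepV {[stage p args k T (a :: at') []]} {V | a = 0 ∧ V = [stage p args k T at' []]} := by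
  by_cases ha : a = 0
  · subst ha
    simpa [stage, plusBody, bags] using sStepV_apps (StepT.taubarNil T) (bags p at')
  · have hbag : (a.map p).toList ≠ [] := by simpa using ha
    simpa [stage, plusBody, bags, ha] using sStepV_apps (StepT.taubarCons T hbag) (bags p at')

lemma sStepV_stage_cons_cons (hp : ∀ δ, fv (p δ) = ∅) (hargs : ∀ γ, ∀ g ∈ args γ, fvList g = ∅)
    {T : List Tm} (hT : fvList T = ∅) (k : ℕ) (a b : Multiset D) (at' bt : List (Multiset D)) :
    SStepV {[stage p args k T (a :: at') (b :: bt)]}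
      ((fun dl => [stage p args (k + 1)
        (T ++ List.zipWith (fun γ δ => apps (p δ) (args γ)) b.toList dl) at' bt]) ''
          {dl : List D | (dl : Multiset D) = a ∧ dl.length = b.toList.length}) := by
  set gss := b.toList.map args
  set F := fun q => lams (List.range' (k + 1) bt.length)
    (.taubar (T ++ List.zipWith apps q gss ++ plusBody args (k + 1) bt))
  have hstage : stage p args k T (a :: at') (b :: bt) =
      apps (.app (.lam k (F (.replicate gss.length (.var k)))) (a.map p).toList) (bags p at') := by
    simp only [F, gss, List.zipWith_replicate_length, List.map_map]
    simp [stage, bags, plusBody, List.range'_succ, Function.comp_def]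
  have hβ : zeroSub k (lsubIter k {F (.replicate gss.length (.var k))} (a.map p).toList) =
      F '' {q | q.Perm (a.map p).toList ∧ q.length = gss.length} := by
    refine zeroSub_lsubIter_row (by simp [List.mem_range'_1]) (by simp [hT]) (fun h => ?_) ?_ ?_
    · simpa using fvList_plusBody_subset _ (fun _ _ γ _ => hargs γ) h
    · simpa [gss] using fun γ _ => hargs γ
    · simp [hp]
  have h := sStepV_apps (StepT.beta k (F (.replicate gss.length (.var k))) (a.map p).toList)
    (bags p at')
  rw [hβ, setOf_perm_toList_map, Set.image_image, Set.image_image] at h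
  rw [hstage]
  convert h using 2
  · ext dl
    simp only [stage, F, gss, List.zipWith_map]
    rw [List.zipWith_comm]
  · simp [gss]

lemma evalsTo_stage_cons_cons (hp : ∀ δ, fv (p δ) = ∅)
    (hargs : ∀ γ, ∀ g ∈ args γ, fvList g = ∅) {k : ℕ} {T : List Tm} {t : Prop}
    (hT : fvList T = ∅) (hTt : EvalsTo {T} t) {a b : Multiset D} {at' bt : List (Multiset D)}
    (hpairs : ∀ γ ∈ b, ∀ δ ∈ a, EvalsTo {[apps (p δ) (args γ)]} (γ = δ))
    (ih : ∀ (T' : List Tm) (t' : Prop), fvList T' = ∅ → EvalsTo {T'} t' →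
      EvalsTo {[stage p args (k + 1) T' at' bt]} (t' ∧ at' = bt)) :
    EvalsTo {[stage p args k T (a :: at') (b :: bt)]} (t ∧ a :: at' = b :: bt) := by
  set S := {dl : List D | (dl : Multiset D) = a ∧ dl.length = b.toList.length}
  have hS : S.Finite := (List.finite_toSet a.toList.permutations).subset fun dl hdl =>
    List.mem_permutations.2 (by rw [← Multiset.coe_eq_coe, hdl.1, Multiset.coe_toList])
  have hrow : ∀ dl ∈ S, EvalsTo
      {[stage p args (k + 1) (T ++ List.zipWith (fun γ δ => apps (p δ) (args γ)) b.toList dl)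
        at' bt]} ((t ∧ b.toList = dl) ∧ at' = bt) := by
    intro dl hdl
    refine ih _ _ ?_ (hTt.append (evalsTo_zipWith hdl.2.symm fun γ δ hγδ => ?_))
    · rw [fvList_append, hT, fvList_zipWith_of_closed (fun γ δ => by
        rw [fv_apps_of_closed (hargs γ), hp])]
      exact Set.empty_union _
    · obtain ⟨hγ, hδ⟩ := List.of_mem_zip hγδ
      exact hpairs γ (Multiset.mem_toList.1 hγ) δ (hdl.1 ▸ Multiset.mem_coe.2 hδ)
  refine ReflTransGen.head (sStepV_stage_cons_cons hp hargs hT k a b at' bt) ?_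
  rw [Set.image_eq_iUnion]
  refine (EvalsTo.biUnion hS hrow).of_iff ⟨?_, ?_⟩
  · rintro ⟨dl, ⟨hdl, -⟩, ⟨ht, rfl⟩, rfl⟩
    exact ⟨ht, by rw [← hdl, Multiset.coe_toList]⟩
  · rintro ⟨ht, hab⟩
    obtain ⟨rfl, rfl⟩ := List.cons.inj hab
    exact ⟨a.toList, ⟨Multiset.coe_toList a, rfl⟩, ⟨ht, rfl⟩, rfl⟩

theorem evalsTo_stage (hp : ∀ δ, fv (p δ) = ∅) (hargs : ∀ γ, ∀ g ∈ args γ, fvList g = ∅) :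
    ∀ (as bs : List (Multiset D)) (k : ℕ) (T : List Tm) (t : Prop), Normalized as →
      Normalized bs → fvList T = ∅ → EvalsTo {T} t →
      (∀ b ∈ bs, ∀ a ∈ as, ∀ γ ∈ b, ∀ δ ∈ a, EvalsTo {[apps (p δ) (args γ)]} (γ = δ)) →
      EvalsTo {[stage p args k T as bs]} (t ∧ as = bs)
  | [], [], k, T, t, _, _, _, hTt, _ =>
    EvalsTo.of_iff (ReflTransGen.head (sStepV_stage_nil_nil k T) hTt) (by simp)
  | [], b :: bt, k, T, t, has, hbs, hT, hTt, hpairs => by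
    refine ReflTransGen.head (sStepV_stage_nil_cons hargs hT k b bt) ?_
    by_cases hb : b = 0
    · subst hb
      have hbt := hbs.ne_nil_of_zero_cons
      have := evalsTo_stage hp hargs [] bt (k + 1) T t has hbs.of_cons hT hTt
        fun b' hb' => hpairs b' (List.mem_cons_of_mem _ hb')
      simpa [Set.ofPred_eq_eq_singleton, Ne.symm hbt, EvalsTo] using this
    · simpa [hb, EvalsTo, outcome] using ReflTransGen.refl
  | a :: at', [], k, T, t, has, hbs, hT, hTt, hpairs => by
    refine ReflTransGen.head (sStepV_stage_cons_nil k T a at') ?_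
    by_cases ha : a = 0
    · subst ha
      have hat := has.ne_nil_of_zero_cons
      have := evalsTo_stage hp hargs at' [] k T t has.of_cons hbs hT hTt
        fun b' hb' a' ha' => hpairs b' hb' a' (List.mem_cons_of_mem _ ha')
      simpa [Set.ofPred_eq_eq_singleton, hat, EvalsTo] using this
    · simpa [ha, EvalsTo, outcome] using ReflTransGen.refl
  | a :: at', b :: bt, k, T, t, has, hbs, hT, hTt, hpairs => by
    have htails : ∀ b' ∈ bt, ∀ a' ∈ at', ∀ γ ∈ b', ∀ δ ∈ a',
        EvalsTo {[apps (p δ) (args γ)]} (γ = δ) := fun b' hb' a' ha' =>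
      hpairs b' (List.mem_cons_of_mem _ hb') a' (List.mem_cons_of_mem _ ha')
    exact evalsTo_stage_cons_cons hp hargs hT hTt
      (hpairs b List.mem_cons_self a List.mem_cons_self) fun T' t' hT' hT't =>
        evalsTo_stage hp hargs at' bt (k + 1) T' t' has.of_cons hbs.of_cons hT' hT't htails
termination_by as bs => as.length + bs.length

end Stages

/-! ### The points of the relational model -/

lemma parallel_map_singleton {α : Type*} (f : α → Tm) :
    ∀ l : List α, parallel (l.map fun a => [f a]) = l.map f
  | [] => rfl
  | a :: l => congrArg (f a :: ·) (parallel_map_singleton f l)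

lemma parallel_blocks_eq_plusBody {mt : D → Tm → List Tm} {args : D → List (List Tm)}
    (hmt : ∀ γ M, mt γ M = [apps M (args γ)]) :
    ∀ (bs : List (Multiset D)) (k : ℕ), parallel ((List.range bs.length).map fun i =>
      parallel ((bs.getD i 0).toList.map fun β => mt β (.var (k + i)))) = plusBody args k bs
  | [], _ => rfl
  | b :: bs, k => by
    rw [List.length_cons, List.range_succ_eq_map, List.map_cons, List.map_map, parallel,
      List.foldr_cons, ← parallel, plusBody, ← parallel_blocks_eq_plusBody hmt bs (k + 1)]
    simp [hmt, parallel_map_singleton, Function.comp_def, Nat.add_assoc, Nat.add_comm 1]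

lemma exists_seqD_buildD_eq (e : D ≃ Multiset D × D) (star : D) :
    ∀ {as : List (Multiset D)} {a : Multiset D}, a ∈ as → ∃ i, seqD e i (buildD e star as) = a
  | a' :: as, a, h => by
    rcases List.mem_cons.1 h with rfl | h
    · exact ⟨0, by simp [seqD, buildD]⟩
    · obtain ⟨i, hi⟩ := exists_seqD_buildD_eq e star h
      exact ⟨i + 1, by simpa [seqD, buildD] using hi⟩

lemma plusSpec_eq_lams_plusBody {mt : D → Tm → List Tm} {args : D → List (List Tm)}
    (hmt : ∀ γ M, mt γ M = [apps M (args γ)]) (as : List (Multiset D)) :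
    plusSpec mt as = lams (List.range as.length) (.taubar (plusBody args 0 as)) := by
  have hbody := parallel_blocks_eq_plusBody hmt as 0
  simp only [zero_add] at hbody
  rw [plusSpec, hbody]
  rfl

section Model

variable {cs : D → List (Multiset D)} {p : D → Tm}

lemma fv_eq_empty_of_wellFounded (hwf : WellFounded fun δ γ : D => ∃ a ∈ cs γ, δ ∈ a)
    (hp : ∀ γ, p γ = lams (List.range (cs γ).length)
      (.taubar (plusBody (fun γ => bags p (cs γ)) 0 (cs γ)))) (γ : D) :
    fv (p γ) = ∅ ∧ ∀ g ∈ bags p (cs γ), fvList g = ∅ := by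
  induction γ using hwf.induction with
  | _ γ ih =>
  constructor
  · have hbody := fvList_plusBody_subset 0 fun b hb γ' hγ' => (ih γ' ⟨b, hb, hγ'⟩).2
    rw [hp, fv_lams, fv, Set.sdiff_eq_empty]
    intro y hy
    simpa using hbody hy
  · simp only [bags, List.mem_map]
    rintro _ ⟨a, ha, rfl⟩
    rw [fvList_eq_empty]
    intro N hN
    obtain ⟨δ, hδ, rfl⟩ := Multiset.mem_map.1 (Multiset.mem_toList.1 hN)
    exact (ih δ ⟨a, ha, hδ⟩).1

theorem evalsTo_apps_bags (hwf : WellFounded fun δ γ : D => ∃ a ∈ cs γ, δ ∈ a)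
    (hnorm : ∀ γ, Normalized (cs γ)) (hinj : Function.Injective cs)
    (hp : ∀ γ, p γ = lams (List.range (cs γ).length)
      (.taubar (plusBody (fun γ => bags p (cs γ)) 0 (cs γ)))) (α β : D) :
    EvalsTo {[apps (p β) (bags p (cs α))]} (α = β) := by
  have hclosed := fv_eq_empty_of_wellFounded hwf hp
  have step (α β : D) (hpairs : ∀ b ∈ cs β, ∀ a ∈ cs α, ∀ γ ∈ b, ∀ δ ∈ a,
      EvalsTo {[apps (p δ) (bags p (cs γ))]} (γ = δ)) :
      EvalsTo {[apps (p β) (bags p (cs α))]} (α = β) := by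
    rw [hp β, List.range_eq_range']
    exact (evalsTo_stage (fun δ => (hclosed δ).1) (fun γ => (hclosed γ).2) (cs α) (cs β) 0 []
      True (hnorm α) (hnorm β) rfl evalsTo_nil hpairs).of_iff (by simp [hinj.eq_iff])
  -- the pairs needed at `(α, β)` have their first point below `β` and their second below `α`
  have key (α : D) : ∀ β, EvalsTo {[apps (p β) (bags p (cs α))]} (α = β) ∧
      EvalsTo {[apps (p α) (bags p (cs β))]} (β = α) := by
    induction α using hwf.induction with
    | _ α ih =>
    exact fun β => ⟨step α β fun _ _ a ha _ _ δ hδ => (ih δ ⟨a, ha, hδ⟩ _).2,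
      step β α fun b hb _ _ γ hγ _ _ => (ih γ ⟨b, hb, hγ⟩ _).1⟩
  exact (key α β).1

end Model

/-- For `α, β` in the relational model `D`, the closed test `α⁻[β⁺]` reduces to the
success `ε` (the empty test) when `α = β`, and to `0` (the empty sum) otherwise.
Here `p α = α⁺` and `mt α M = α⁻[M]` are the maps defined by mutual recursion on rank
(well-founded by `hwf`), characterized by `hp`, `hmt`. -/
theorem test_of_point_separates (e : D ≃ Multiset D × D) (star : D)
    (hstar : e star = (0, star))
    (hwf : WellFounded (fun β α : D => ∃ i : ℕ, β ∈ seqD e i α))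
    (hqf : ∀ α : D, ∃ as : List (Multiset D),
      (∀ h : as ≠ [], as.getLast h ≠ 0) ∧ α = buildD e star as)
    (p : D → Tm) (mt : D → Tm → List Tm)
    (hp : ∀ as : List (Multiset D), (∀ h : as ≠ [], as.getLast h ≠ 0) →
      p (buildD e star as) = plusSpec mt as)
    (hmt : ∀ as : List (Multiset D), (∀ h : as ≠ [], as.getLast h ≠ 0) →
      ∀ M : Tm, mt (buildD e star as) M = minusSpec p as M) :
    ∀ α β : D,
      (α = β → Relation.ReflTransGen SStepV {mt α (p β)} {([] : List Tm)}) ∧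
      (α ≠ β → Relation.ReflTransGen SStepV {mt α (p β)} (∅ : Set (List Tm))) := by
  choose cs hnorm hcs using hqf
  have hmt' (γ : D) (M : Tm) : mt γ M = [apps M (bags p (cs γ))] := by
    have := hmt (cs γ) (hnorm γ) M
    rwa [← hcs γ] at this
  have hp' (γ : D) : p γ = lams (List.range (cs γ).length)
      (.taubar (plusBody (fun γ => bags p (cs γ)) 0 (cs γ))) := by
    have := hp (cs γ) (hnorm γ)
    rwa [← hcs γ, plusSpec_eq_lams_plusBody hmt'] at this
  have hwf' : WellFounded fun δ γ : D => ∃ a ∈ cs γ, δ ∈ a := hwf.mono fun δ γ ⟨a, ha, hδ⟩ => by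
    obtain ⟨i, hi⟩ := exists_seqD_buildD_eq e star ha
    exact ⟨i, by rw [hcs γ, hi]; exact hδ⟩
  have hinj : Function.Injective cs := fun α β h => by rw [hcs α, hcs β, h]
  intro α β
  have h := evalsTo_apps_bags hwf' hnorm hinj hp' α β
  rw [← hmt'] at h
  exact ⟨h.of_true, h.of_false⟩
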